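/- Let ω be irrational and satisfy the Diophantine condition |mω + n| ≥ γ|m|^{-τ} for all (m,n) ∈ ℤ² \ {(0,0)}, where 1 < τ < 2 and γ > 0, and let l ≥ 4 be an integer. Let J ∈ C^l(ℝ) be 2π_p-periodic with ∫₀^{2π_p} J(x) dx = 0. Then there exists a 2π_p-periodic function Ω ∈ C^{l-3}(ℝ) solving the homological equation Ω(x + 2ωπ_p) − Ω(x) = J(x) for all x ∈ ℝ. -/

import Mathlib

/-- The `p`-analogue of `π`: `π_p = 2π (p-1)^{1/p} / (p sin(π/p))`. -/
noncomputable def pip (p : ℝ) : ℝ :=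
  2 * Real.pi * (p - 1) ^ (1 / p) / (p * Real.sin (Real.pi / p))

/-!
Write `T = 2π_p`, `a = ωT` and `e_n(x) = exp(2πinx/T)`. Shifting by `a` multiplies `e_n` by
`exp(2πinω)`, so if `J = ∑ ĵ_n e_n` then `Ω = ∑ ĵ_n / (exp(2πinω) - 1) e_n` solves the equation;
`ĵ_0 = 0` because `J` has mean zero. Integrating by parts `l` times gives `|ĵ_n| ≲ |n|^{-l}`, and
the Diophantine condition bounds the small divisors below by `4γ|n|^{-τ}`. The coefficients of `Ω`
are therefore `O(|n|^{τ-l})`, and since `τ < 2` the series differentiated `l - 3` times still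
converges absolutely and uniformly.
-/

open Complex Real Function MeasureTheory

lemma pip_pos {p : ℝ} (hp : 1 < p) : 0 < pip p := by
  have hsin : 0 < Real.sin (π / p) :=
    Real.sin_pos_of_pos_of_lt_pi (by positivity) (div_lt_self pi_pos hp)
  have hroot : 0 < (p - 1) ^ (1 / p) := rpow_pos_of_pos (by linarith) _
  unfold pip
  positivity

theorem Function.Periodic.deriv {E : Type*} [NormedAddCommGroup E] [NormedSpace ℝ E]
    {f : ℝ → E} {c : ℝ} (h : Periodic f c) : Periodic (deriv f) c := fun x => by
  rw [← deriv_comp_add_const, show (fun y => f (y + c)) = f from funext h]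

theorem Function.Periodic.iteratedDeriv {E : Type*} [NormedAddCommGroup E] [NormedSpace ℝ E]
    {f : ℝ → E} {c : ℝ} (h : Periodic f c) (k : ℕ) : Periodic (iteratedDeriv k f) c := by
  induction k with
  | zero => simpa using h
  | succ k ih => simpa [iteratedDeriv_succ] using ih.deriv

theorem four_mul_abs_sub_round_le_norm_exp_sub_one (θ : ℝ) :
    4 * |θ - round θ| ≤ ‖exp (2 * π * I * θ) - 1‖ := by
  have hnorm : ‖exp (2 * π * I * θ) - 1‖ = 2 * |Real.sin (π * θ)| := by
    rw [show 2 * π * I * θ = I * ((2 * π * θ : ℝ) : ℂ) by push_cast; ring,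
      norm_exp_I_mul_ofReal_sub_one, norm_mul, Real.norm_eq_abs,
      show 2 * π * θ / 2 = π * θ by ring]
    norm_num
  have hsin : |Real.sin (π * θ)| = |Real.sin (π * (θ - round θ))| := by
    rw [mul_sub, mul_comm π (round θ : ℝ), Real.sin_sub_int_mul_pi, abs_mul, abs_neg_one_zpow,
      one_mul]
  have hjordan : 2 / π * |π * (θ - round θ)| ≤ |Real.sin (π * (θ - round θ))| := by
    refine Real.mul_abs_le_abs_sin ?_
    rw [abs_mul, abs_of_pos pi_pos]
    nlinarith [abs_sub_round θ, pi_pos]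
  rw [abs_mul, abs_of_pos pi_pos, ← mul_assoc, div_mul_cancel₀ _ pi_ne_zero] at hjordan
  linarith

theorem four_mul_rpow_le_norm_exp_sub_one_of_diophantine {ω γ τ : ℝ}
    (hdio : ∀ m n : ℤ, (m, n) ≠ (0, 0) → γ / |(m : ℝ)| ^ τ ≤ |(m : ℝ) * ω + (n : ℝ)|)
    {n : ℤ} (hn : n ≠ 0) :
    4 * γ * |(n : ℝ)| ^ (-τ) ≤ ‖exp (2 * π * I * (n * ω : ℝ)) - 1‖ := by
  have h := hdio n (-round ((n : ℝ) * ω)) (by simp [hn])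
  rw [Real.rpow_neg (abs_nonneg _), mul_assoc, ← div_eq_mul_inv]
  push_cast at h
  rw [← sub_eq_add_neg] at h
  have := four_mul_abs_sub_round_le_norm_exp_sub_one ((n : ℝ) * ω)
  push_cast at this ⊢
  linarith

theorem norm_two_pi_I_mul_intCast_div {T : ℝ} (hT : 0 < T) (n : ℤ) :
    ‖2 * π * I * n / T‖ = 2 * π / T * |(n : ℝ)| := by
  simp [abs_of_pos pi_pos, abs_of_pos hT]
  ring

theorem Summable.norm_mul_abs_pow_of_le {E : Type*} [SeminormedAddCommGroup E] {d : ℤ → E}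
    {k m : ℕ} (hd : Summable fun n : ℤ => ‖d n‖ * |(n : ℝ)| ^ m) (hk : k ≤ m) :
    Summable fun n : ℤ => ‖d n‖ * |(n : ℝ)| ^ k := by
  refine hd.of_norm_bounded_eventually ?_
  filter_upwards [(Set.finite_singleton (0 : ℤ)).compl_mem_cofinite] with n hn
  have hn1 : 1 ≤ |(n : ℝ)| := by
    exact_mod_cast Int.one_le_abs (by simpa using hn)
  rw [Real.norm_of_nonneg (by positivity)]
  gcongr

theorem summable_norm_div_mul_abs_pow {c e : ℤ → ℂ} {C δ s τ : ℝ} {m : ℕ} (hδ : 0 < δ)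
    (hc : ∀ n : ℤ, n ≠ 0 → ‖c n‖ ≤ C * |(n : ℝ)| ^ (-s))
    (he : ∀ n : ℤ, n ≠ 0 → δ * |(n : ℝ)| ^ (-τ) ≤ ‖e n‖)
    (hs : m + 1 + τ < s) :
    Summable fun n : ℤ => ‖c n / e n‖ * |(n : ℝ)| ^ m := by
  refine ((summable_abs_int_rpow (b := s - τ - m) (by linarith)).mul_left (C / δ))
    |>.of_norm_bounded_eventually ?_
  filter_upwards [(Set.finite_singleton (0 : ℤ)).compl_mem_cofinite] with n hn
  have hn0 : n ≠ 0 := hn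
  have hn' : 0 < |(n : ℝ)| := by positivity
  rw [Real.norm_of_nonneg (by positivity), norm_div]
  calc ‖c n‖ / ‖e n‖ * |(n : ℝ)| ^ m
      ≤ C * |(n : ℝ)| ^ (-s) / (δ * |(n : ℝ)| ^ (-τ)) * |(n : ℝ)| ^ m := by
        gcongr
        · exact (norm_nonneg _).trans (hc n hn0)
        · exact hc n hn0
        · exact he n hn0
    _ = C / δ * |(n : ℝ)| ^ (-(s - τ - m)) := by
        rw [← rpow_natCast, neg_sub, rpow_sub hn', rpow_sub hn', rpow_neg hn'.le,
          rpow_neg hn'.le]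
        field_simp

section

variable {T : ℝ}

theorem contDiff_fourier_coe (n : ℤ) {N : WithTop ℕ∞} :
    ContDiff ℝ N fun x : ℝ => fourier n (x : AddCircle T) := by
  simp_rw [fourier_coe_apply]
  exact ((contDiff_const.mul ofRealCLM.contDiff).div_const _).cexp

theorem iteratedDeriv_fourier_coe (n : ℤ) (k : ℕ) :
    iteratedDeriv k (fun x : ℝ => fourier n (x : AddCircle T)) =
      fun x : ℝ => (2 * π * I * n / T) ^ k * fourier n (x : AddCircle T) := by
  induction k with
  | zero => simp
  | succ k ih =>
    rw [iteratedDeriv_succ, ih]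
    funext x
    rw [((hasDerivAt_fourier T n x).const_mul _).deriv]
    ring

theorem fourier_apply_add (n : ℤ) (x y : AddCircle T) :
    fourier n (x + y) = fourier n x * fourier n y := by
  simp only [fourier_apply, smul_add, AddCircle.toCircle_add, Circle.coe_mul]

theorem summable_mul_fourier {d : ℤ → ℂ} (hd : Summable fun n => ‖d n‖) (y : AddCircle T) :
    Summable fun n => d n * fourier n y :=
  hd.of_norm_bounded fun n => by rw [norm_mul, fourier_apply, Circle.norm_coe, mul_one]

variable [hT : Fact (0 < T)]

theorem fourierCoeff_lift_of_hasDerivAt {f f' : ℝ → ℂ} (hf : Periodic f T)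
    (hf' : Periodic f' T) (hderiv : ∀ x, HasDerivAt f (f' x) x) (hcont : Continuous f')
    (n : ℤ) : fourierCoeff hf'.lift n = 2 * π * I * n / T * fourierCoeff hf.lift n := by
  simp only [fourierCoeff_eq_intervalIntegral _ n 0, Periodic.lift_coe, zero_add, smul_eq_mul]
  have hfourier_cont : Continuous fun x : ℝ => fourier (-n) (x : AddCircle T) :=
    (map_continuous _).comp (AddCircle.continuous_mk' T)
  rw [intervalIntegral.integral_mul_deriv_eq_deriv_mul (fun x _ => hasDerivAt_fourier_neg T n x)
    (fun x _ => hderiv x) ((continuous_const.mul hfourier_cont).intervalIntegrable _ _)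
    (hcont.intervalIntegrable _ _)]
  have hboundary :
      fourier (-n) (T : AddCircle T) * f T = fourier (-n) ((0 : ℝ) : AddCircle T) * f 0 := by
    rw [AddCircle.coe_period, ← hf 0, zero_add, QuotientAddGroup.mk_zero]
  simp only [hboundary, sub_self, zero_sub, mul_assoc, intervalIntegral.integral_const_mul,
    real_smul]
  ring

theorem fourierCoeff_lift_iteratedDeriv {f : ℝ → ℂ} {l : ℕ} (hf : Periodic f T)
    (hsmooth : ContDiff ℝ l f) {k : ℕ} (hk : k ≤ l) (n : ℤ) :
    fourierCoeff (hf.iteratedDeriv k).lift n =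
      (2 * π * I * n / T) ^ k * fourierCoeff hf.lift n := by
  induction k with
  | zero =>
    simp only [fourierCoeff_eq_intervalIntegral _ n 0, Periodic.lift_coe, iteratedDeriv_zero,
      pow_zero, one_mul]
  | succ k ih =>
    have hderiv (x : ℝ) : HasDerivAt (iteratedDeriv k f) (iteratedDeriv (k + 1) f x) x := by
      rw [iteratedDeriv_succ]
      exact ((hsmooth.differentiable_iteratedDeriv k (by exact_mod_cast hk)) x).hasDerivAt
    rw [fourierCoeff_lift_of_hasDerivAt (hf.iteratedDeriv k) (hf.iteratedDeriv (k + 1)) hderiv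
      (hsmooth.continuous_iteratedDeriv _ (by exact_mod_cast hk)), ih (by omega), pow_succ]
    ring

theorem norm_fourierCoeff_le_of_forall_norm_le {E : Type*} [NormedAddCommGroup E]
    [NormedSpace ℂ E] [CompleteSpace E] {g : AddCircle T → E} {M : ℝ} (hg : ∀ x, ‖g x‖ ≤ M)
    (n : ℤ) : ‖fourierCoeff g n‖ ≤ M := by
  rw [fourierCoeff]
  refine (norm_integral_le_of_norm_le_const (C := M)
    (Filter.Eventually.of_forall fun x => ?_)).trans_eq (by simp)
  rw [norm_smul, fourier_apply, Circle.norm_coe, one_mul]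
  exact hg x

theorem exists_norm_fourierCoeff_lift_le {f : ℝ → ℂ} {l : ℕ} (hf : Periodic f T)
    (hsmooth : ContDiff ℝ l f) :
    ∃ C, ∀ n : ℤ, n ≠ 0 → ‖fourierCoeff hf.lift n‖ ≤ C * |(n : ℝ)| ^ (-(l : ℝ)) := by
  obtain ⟨M, hM⟩ := isBounded_iff_forall_norm_le.mp ((hf.iteratedDeriv l).isBounded_of_continuous
    hT.out.ne' (hsmooth.continuous_iteratedDeriv l le_rfl))
  refine ⟨(T / (2 * π)) ^ l * M, fun n hn => ?_⟩
  have hcoeff := norm_fourierCoeff_le_of_forall_norm_le (g := (hf.iteratedDeriv l).lift)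
    (fun x => QuotientAddGroup.induction_on x fun y => hM _ ⟨y, rfl⟩) n
  rw [fourierCoeff_lift_iteratedDeriv hf hsmooth le_rfl, norm_mul, norm_pow] at hcoeff
  have hn' : 0 < |(n : ℝ)| := by positivity
  have hT0 := hT.out
  rw [norm_two_pi_I_mul_intCast_div hT0, mul_pow] at hcoeff
  rw [Real.rpow_neg hn'.le, Real.rpow_natCast]
  calc ‖fourierCoeff hf.lift n‖
      = (T / (2 * π)) ^ l * ((2 * π / T) ^ l * |(n : ℝ)| ^ l * ‖fourierCoeff hf.lift n‖) *
          (|(n : ℝ)| ^ l)⁻¹ := by rw [div_pow, div_pow]; field_simp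
    _ ≤ (T / (2 * π)) ^ l * M * (|(n : ℝ)| ^ l)⁻¹ := by gcongr

theorem contDiff_tsum_mul_fourier {d : ℤ → ℂ} {m : ℕ}
    (hd : Summable fun n : ℤ => ‖d n‖ * |(n : ℝ)| ^ m) :
    ContDiff ℝ m fun x : ℝ => ∑' n, d n * fourier n (x : AddCircle T) := by
  refine contDiff_tsum (v := fun k n => (2 * π / T) ^ k * (‖d n‖ * |(n : ℝ)| ^ k))
    (fun n => contDiff_const.mul (contDiff_fourier_coe n))
    (fun k hk => (hd.norm_mul_abs_pow_of_le (by exact_mod_cast hk)).mul_left _) ?_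
  intro k n x _
  have hT0 := hT.out
  rw [norm_iteratedFDeriv_eq_norm_iteratedDeriv, iteratedDeriv_const_mul_field,
    iteratedDeriv_fourier_coe, norm_mul, norm_mul, norm_pow, norm_two_pi_I_mul_intCast_div hT0,
    fourier_apply, Circle.norm_coe, mul_pow]
  exact le_of_eq (by ring)

theorem tsum_mul_fourier_add_sub {f : ℝ → ℂ} (hf : Periodic f T) (hcont : Continuous f)
    {d : ℤ → ℂ} (hd : Summable fun n => ‖d n‖) {a : ℝ}
    (hdc : ∀ n, d n * (fourier n (a : AddCircle T) - 1) = fourierCoeff hf.lift n) (x : ℝ) :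
    ∑' n, d n * fourier n ((x + a : ℝ) : AddCircle T) -
      ∑' n, d n * fourier n (x : AddCircle T) = f x := by
  let F : C(AddCircle T, ℂ) := ⟨hf.lift, continuous_coinduced_dom.mpr hcont⟩
  have hF : Summable (fourierCoeff F) := by
    refine (hd.mul_left 2).of_norm_bounded fun n => ?_
    change ‖fourierCoeff hf.lift n‖ ≤ _
    rw [← hdc, norm_mul, mul_comm]
    gcongr
    refine (norm_sub_le _ _).trans ?_
    rw [fourier_apply, Circle.norm_coe, norm_one]
    norm_num
  rw [← Summable.tsum_sub (summable_mul_fourier hd _) (summable_mul_fourier hd _)]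
  have hterm (n : ℤ) : d n * fourier n ((x + a : ℝ) : AddCircle T) -
      d n * fourier n (x : AddCircle T) = fourierCoeff F n • fourier n (x : AddCircle T) := by
    change _ = fourierCoeff hf.lift n • _
    rw [← hdc, smul_eq_mul, AddCircle.coe_add, fourier_apply_add]
    ring
  rw [tsum_congr hterm]
  exact (has_pointwise_sum_fourier_series_of_summable hF x).tsum_eq

end

theorem homological_equation_general
    (p ω γ τ : ℝ) (l : ℕ) (J : ℝ → ℝ)
    (hp : 2 ≤ p)
    (hτ2 : τ < 2) (hγ : 0 < γ)
    (hdio : ∀ m n : ℤ, (m, n) ≠ (0, 0) → γ / |(m : ℝ)| ^ τ ≤ |(m : ℝ) * ω + (n : ℝ)|)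
    (hl : 4 ≤ l)
    (hJ : ContDiff ℝ (l : ℕ∞) J)
    (hJper : Function.Periodic J (2 * pip p))
    (hJmean : ∫ x in (0 : ℝ)..(2 * pip p), J x = 0) :
    ∃ Ω : ℝ → ℝ, ContDiff ℝ ((l - 3 : ℕ) : ℕ∞) Ω ∧
      Function.Periodic Ω (2 * pip p) ∧
      ∀ x : ℝ, Ω (x + 2 * ω * pip p) - Ω x = J x := by
  have hpip := pip_pos (by linarith : (1 : ℝ) < p)
  set T := 2 * pip p
  have : Fact (0 < T) := ⟨by positivity⟩
  set f : ℝ → ℂ := fun x => (J x : ℂ)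
  have hfper : Periodic f T := fun x => by simp [f, hJper x]
  have hf : ContDiff ℝ (l : ℕ∞) f := ofRealCLM.contDiff.comp hJ
  have hmean : fourierCoeff hfper.lift 0 = 0 := by
    simp [fourierCoeff_eq_intervalIntegral _ 0 0, f, intervalIntegral.integral_ofReal, hJmean]
  set e : ℤ → ℂ := fun n => fourier n ((2 * ω * pip p : ℝ) : AddCircle T) - 1
  have he (n : ℤ) (hn : n ≠ 0) : 4 * γ * |(n : ℝ)| ^ (-τ) ≤ ‖e n‖ := by
    have hshift : e n = exp (2 * π * I * ((n * ω : ℝ) : ℂ)) - 1 := by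
      simp only [e, T, fourier_coe_apply]
      push_cast
      have : (pip p : ℂ) ≠ 0 := by exact_mod_cast hpip.ne'
      field_simp
    rw [hshift]
    exact four_mul_rpow_le_norm_exp_sub_one_of_diophantine hdio hn
  obtain ⟨C, hC⟩ := exists_norm_fourierCoeff_lift_le hfper hf
  set d : ℤ → ℂ := fun n => fourierCoeff hfper.lift n / e n
  have hd : Summable fun n : ℤ => ‖d n‖ * |(n : ℝ)| ^ (l - 3) :=
    summable_norm_div_mul_abs_pow (by positivity) hC he
      (by rw [Nat.cast_sub (by omega)]; push_cast; linarith)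
  -- at `n = 0` both sides vanish: `ĵ_0 = 0`, and `d 0 = ĵ_0 / 0 = 0`
  have hdc (n : ℤ) : d n * e n = fourierCoeff hfper.lift n := by
    rcases eq_or_ne n 0 with rfl | hn
    · simp [d, hmean]
    · exact div_mul_cancel₀ _
        (norm_pos_iff.mp ((by positivity : (0 : ℝ) < _).trans_le (he n hn)))
  refine ⟨fun x => (∑' n, d n * fourier n (x : AddCircle T)).re,
    reCLM.contDiff.comp (contDiff_tsum_mul_fourier hd), fun x => by simp,
    fun x => ?_⟩
  have hsum : Summable fun n => ‖d n‖ := by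
    simpa using hd.norm_mul_abs_pow_of_le (Nat.zero_le _)
  simpa [f] using congrArg re (tsum_mul_fourier_add_sub hfper hf.continuous hsum hdc x)

/-- **solution of the homological equation.** Let `ω` be a Diophantine
irrational (`|mω + n| ≥ γ|m|^{-τ}`, `1 < τ < 2`, `γ > 0`) and `l ≥ 4`.  If
`J ∈ C^l(ℝ)` is `2π_p`-periodic with zero mean, then there is a `2π_p`-periodic
`Ω ∈ C^{l-3}(ℝ)` with `Ω(x + 2ωπ_p) − Ω(x) = J(x)` for all `x`. -/
theorem homological_equation
    (p ω γ τ : ℝ) (l : ℕ) (J : ℝ → ℝ)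
    (hp : 2 ≤ p)
    (hωirr : Irrational ω)
    (hτ1 : 1 < τ) (hτ2 : τ < 2) (hγ : 0 < γ)
    (hdio : ∀ m n : ℤ, (m, n) ≠ (0, 0) → γ / |(m : ℝ)| ^ τ ≤ |(m : ℝ) * ω + (n : ℝ)|)
    (hl : 4 ≤ l)
    (hJ : ContDiff ℝ (l : ℕ∞) J)
    (hJper : Function.Periodic J (2 * pip p))
    (hJmean : ∫ x in (0 : ℝ)..(2 * pip p), J x = 0) :
    ∃ Ω : ℝ → ℝ, ContDiff ℝ ((l - 3 : ℕ) : ℕ∞) Ω ∧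
      Function.Periodic Ω (2 * pip p) ∧
      ∀ x : ℝ, Ω (x + 2 * ω * pip p) - Ω x = J x :=
  homological_equation_general p ω γ τ l J hp hτ2 hγ hdio hl hJ hJper hJmean
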